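/- Let N = 100. For the function λ₃(y, N, n) of the three-cluster CTM, if n ≤ 26 then λ₃(y, 100, n) < 0 for all y ≥ 0 (no cascade is possible), while for n = 27 there exists y₊ > 0 with λ₃(y₊, 100, 27) > 0 (a cascade is possible). -/

import Mathlib

/-- `tanh'(y)`. -/
noncomputable def tanhD (y : ℝ) : ℝ := deriv Real.tanh y

/-- The coefficient `c₂(y)` of the quadratic for `u`. -/
noncomputable def c2 (N n y : ℝ) : ℝ := (n + 1 + (n - 1) / (N - 2 * n)) * tanhD y

/-- The coefficient `c₁(y)` of the quadratic for `u`. -/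
noncomputable def c1 (N n y : ℝ) : ℝ :=
  (N - 2 * n - 1) * (N - n - 1) / (N - 2 * n) + (N - 1) * (n - 1) * tanhD y / (N - 2 * n)

/-- The constant coefficient `c₀`. -/
noncomputable def c0 (N n : ℝ) : ℝ := -((N - n - 1) * (N - 1) / (N - 2 * n))

/-- The positive root `u(y)` of `c₂u² + c₁u + c₀ = 0`. -/
noncomputable def uRoot (N n y : ℝ) : ℝ :=
  (-(c1 N n y) + Real.sqrt ((c1 N n y) ^ 2 - 4 * c2 N n y * c0 N n)) / (2 * c2 N n y)

/-- The quantity `c(y)` from the cubic reduction. -/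
noncomputable def cFun (N n y : ℝ) : ℝ :=
  (n - 1) / (N - 2 * n) * tanhD y - (N - n - 1) / ((N - 2 * n) * uRoot N n y)

/-- The quantity `a(y)` from the cubic reduction. -/
noncomputable def aFun (N n y : ℝ) : ℝ :=
  (n - 1) / (N - 2 * n) * iteratedDeriv 3 Real.tanh y / 6

/-- The quantity `b(y)` from the cubic reduction. -/
noncomputable def bFun (N n y : ℝ) : ℝ :=
  (n - 1) / (N - 2 * n) * iteratedDeriv 2 Real.tanh y / 2

/-- The cubic coefficient `λ₃(y, N, n)` at the bifurcation. -/
noncomputable def lam3 (N n y : ℝ) : ℝ :=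
  -(N - 1) / 3 + n * (N - n - 1) / (n - 1) *
    (2 * aFun N n y * cFun N n y - 4 * (bFun N n y) ^ 2) / (cFun N n y) ^ 5


/-!
Solving the quadratic `c₂ u² + c₁ u + c₀ = 0` for `s = tanh' y` rather than for `u` makes `s`
and `c` rational functions of `u`: `s · u · D(u) = (N - n - 1)(N - 1 - (N - 2n - 1) u)` and
`c · D(u) = -2n (N - n - 1)` with `D` linear, while `tanh''` and `tanh'''` are polynomials in
`s`. Hence `λ₃ = -Π(u) / (24 n⁴ (N - n - 1)² (N - 2n)² u³)` for an explicit sextic `Π`, and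
`0 < s ≤ 1` confines `u` to `[1, (N - 1) / (N - 2n - 1))`. For `N = 100` the sign of `Π` there
is read off its Bernstein coefficients: `Π > 0` for `n ≤ 26`, while for `n = 27` and `y = log 3`
(so `s = 9/25`) the root `u` of `73 u² + 643 u = 1100` lies in `[1.46, 1.47]`, where `Π < 0`.
-/

open Real

namespace Real

theorem hasDerivAt_tanh (x : ℝ) : HasDerivAt tanh (1 - tanh x ^ 2) x := by
  have h := (hasDerivAt_sinh x).div (hasDerivAt_cosh x) (cosh_pos x).ne'
  rw [show tanh = fun y => sinh y / cosh y from funext tanh_eq_sinh_div_cosh]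
  refine h.congr_deriv ?_
  beta_reduce
  rw [div_pow, one_sub_div (pow_ne_zero 2 (cosh_pos x).ne')]
  ring

theorem deriv_tanh : deriv tanh = fun x => 1 - tanh x ^ 2 :=
  funext fun x => (hasDerivAt_tanh x).deriv

theorem iteratedDeriv_two_tanh (x : ℝ) :
    iteratedDeriv 2 tanh x = -2 * tanh x * (1 - tanh x ^ 2) := by
  rw [iteratedDeriv_succ, iteratedDeriv_one, deriv_tanh]
  exact (((hasDerivAt_tanh x).pow 2).const_sub 1).deriv.trans (by ring)

theorem iteratedDeriv_three_tanh (x : ℝ) :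
    iteratedDeriv 3 tanh x = (1 - tanh x ^ 2) * (6 * tanh x ^ 2 - 2) := by
  rw [iteratedDeriv_succ, funext iteratedDeriv_two_tanh]
  exact ((((hasDerivAt_tanh x).const_mul (-2)).mul
    (((hasDerivAt_tanh x).pow 2).const_sub 1))).deriv.trans (by simp only [Pi.pow_apply]; ring)

theorem tanh_log_three : tanh (log 3) = 4 / 5 := by
  rw [tanh_eq_sinh_div_cosh, sinh_eq, cosh_eq, exp_neg, exp_log (by norm_num)]
  norm_num

end Real

theorem tanhD_eq (y : ℝ) : tanhD y = 1 - tanh y ^ 2 := (hasDerivAt_tanh y).deriv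

theorem tanhD_pos (y : ℝ) : 0 < tanhD y := by
  rw [tanhD_eq, sub_pos, sq_lt_one_iff_abs_lt_one]
  exact abs_tanh_lt_one y

theorem tanhD_le_one (y : ℝ) : tanhD y ≤ 1 := by
  rw [tanhD_eq]
  nlinarith [sq_nonneg (tanh y)]

theorem aFun_eq (N n y : ℝ) :
    aFun N n y = (n - 1) / (N - 2 * n) * tanhD y * (2 - 3 * tanhD y) / 3 := by
  rw [aFun, iteratedDeriv_three_tanh, tanhD_eq]
  ring

theorem bFun_sq_eq (N n y : ℝ) :
    bFun N n y ^ 2 = ((n - 1) / (N - 2 * n)) ^ 2 * (1 - tanhD y) * tanhD y ^ 2 := by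
  rw [bFun, iteratedDeriv_two_tanh, tanhD_eq]
  ring

theorem quadratic_root_pos {a b c : ℝ} (ha : 0 < a) (hc : c < 0) :
    0 < (-b + √(b ^ 2 - 4 * a * c)) / (2 * a) := by
  have hb : b < √(b ^ 2 - 4 * a * c) :=
    calc b ≤ |b| := le_abs_self b
      _ = √(b ^ 2) := (sqrt_sq_eq_abs b).symm
      _ < √(b ^ 2 - 4 * a * c) := sqrt_lt_sqrt (sq_nonneg b) (by nlinarith)
  exact div_pos (by linarith) (by linarith)

theorem quadratic_root_isRoot {a b c : ℝ} (ha : a ≠ 0) (hd : 0 ≤ b ^ 2 - 4 * a * c) :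
    a * ((-b + √(b ^ 2 - 4 * a * c)) / (2 * a)) ^ 2
      + b * ((-b + √(b ^ 2 - 4 * a * c)) / (2 * a)) + c = 0 := by
  have := (quadratic_eq_zero_iff ha (by rw [discrim, mul_self_sqrt hd]) _).2 (Or.inl rfl)
  linear_combination this

noncomputable def cDen (N n u : ℝ) : ℝ :=
  ((n + 1) * (N - 2 * n) + n - 1) * u + (N - 1) * (n - 1)

noncomputable def cascadePoly (N n u : ℝ) : ℝ :=
  let D := cDen N n u
  let S := N - 1 - (N - 2 * n - 1) * u
  8 * n ^ 4 * (N - 1) * (N - 2 * n) ^ 2 * (N - n - 1) ^ 2 * u ^ 3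
    - n * (N - 2 * n) * S * (2 * u * D - 3 * (N - n - 1) * S) * D ^ 2 * u
    - 3 * (n - 1) * (u * D - (N - n - 1) * S) * S ^ 2 * D ^ 2

section Reduction

variable {N n : ℝ} (hn : 1 < n) (hN : 2 * n < N)
include hn hN

theorem c2_pos (y : ℝ) : 0 < c2 N n y := by
  have : 0 ≤ (n - 1) / (N - 2 * n) := div_nonneg (by linarith) (by linarith)
  exact mul_pos (by linarith) (tanhD_pos y)

theorem c0_neg : c0 N n < 0 := by
  rw [c0, neg_lt_zero]
  exact div_pos (mul_pos (by linarith) (by linarith)) (by linarith)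

theorem uRoot_pos (y : ℝ) : 0 < uRoot N n y :=
  quadratic_root_pos (c2_pos hn hN y) (c0_neg hn hN)

theorem uRoot_isRoot (y : ℝ) :
    c2 N n y * uRoot N n y ^ 2 + c1 N n y * uRoot N n y + c0 N n = 0 :=
  quadratic_root_isRoot (c2_pos hn hN y).ne'
    (by nlinarith [c2_pos hn hN y, c0_neg hn hN, sq_nonneg (c1 N n y)])

theorem cDen_pos {u : ℝ} (hu : 0 < u) : 0 < cDen N n u := by
  have hA : 0 < (n + 1) * (N - 2 * n) + n - 1 := by nlinarith
  have hC : 0 < (N - 1) * (n - 1) := by nlinarith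
  rw [cDen]
  positivity

theorem tanhD_mul_cDen (y : ℝ) :
    tanhD y * (uRoot N n y * cDen N n (uRoot N n y))
      = (N - n - 1) * (N - 1 - (N - 2 * n - 1) * uRoot N n y) := by
  have hm : N - 2 * n ≠ 0 := by linarith
  have h2 : (N - 2 * n) * c2 N n y = ((n + 1) * (N - 2 * n) + n - 1) * tanhD y := by
    rw [c2]; field_simp; ring
  have h1 : (N - 2 * n) * c1 N n y
      = (N - 2 * n - 1) * (N - n - 1) + (N - 1) * (n - 1) * tanhD y := by
    rw [c1]; field_simp
  have h0 : (N - 2 * n) * c0 N n = -((N - n - 1) * (N - 1)) := by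
    rw [c0]; field_simp
  rw [cDen]
  linear_combination (N - 2 * n) * uRoot_isRoot hn hN y - uRoot N n y ^ 2 * h2
    - uRoot N n y * h1 - h0

theorem cFun_mul_cDen (y : ℝ) :
    cFun N n y * cDen N n (uRoot N n y) = -(2 * n * (N - n - 1)) := by
  have hm : N - 2 * n ≠ 0 := by linarith
  have hu := (uRoot_pos hn hN y).ne'
  have hc : (N - 2 * n) * uRoot N n y * cFun N n y
      = (n - 1) * tanhD y * uRoot N n y - (N - n - 1) := by
    rw [cFun]; field_simp
  have hs := tanhD_mul_cDen hn hN y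
  apply mul_left_cancel₀ (mul_ne_zero hm hu)
  rw [cDen] at hs ⊢
  linear_combination (((n + 1) * (N - 2 * n) + n - 1) * uRoot N n y + (N - 1) * (n - 1)) * hc
    + (n - 1) * hs

theorem uRoot_mem (y : ℝ) :
    1 ≤ uRoot N n y ∧ (N - 2 * n - 1) * uRoot N n y < N - 1 := by
  have hu := uRoot_pos hn hN y
  have hs := tanhD_mul_cDen hn hN y
  have hD := cDen_pos hn hN hu
  have hfactor : uRoot N n y * cDen N n (uRoot N n y)
        - (N - n - 1) * (N - 1 - (N - 2 * n - 1) * uRoot N n y)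
      = (uRoot N n y - 1)
        * (((n + 1) * (N - 2 * n) + n - 1) * uRoot N n y + (N - n - 1) * (N - 1)) := by
    rw [cDen]; ring
  have hB : 0 < ((n + 1) * (N - 2 * n) + n - 1) * uRoot N n y + (N - n - 1) * (N - 1) := by
    have : 0 < (n + 1) * (N - 2 * n) + n - 1 := by nlinarith
    have : 0 < (N - n - 1) * (N - 1) := by nlinarith
    positivity
  have hs0 : 0 < tanhD y * (uRoot N n y * cDen N n (uRoot N n y)) :=
    mul_pos (tanhD_pos y) (mul_pos hu hD)
  have hs1 : tanhD y * (uRoot N n y * cDen N n (uRoot N n y))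
      ≤ uRoot N n y * cDen N n (uRoot N n y) :=
    mul_le_of_le_one_left (mul_pos hu hD).le (tanhD_le_one y)
  constructor
  · nlinarith
  · have : 0 < N - n - 1 := by linarith
    nlinarith

theorem lam3_eq (y : ℝ) :
    lam3 N n y = -cascadePoly N n (uRoot N n y)
      / (24 * n ^ 4 * (N - n - 1) ^ 2 * (N - 2 * n) ^ 2 * uRoot N n y ^ 3) := by
  have hu := uRoot_pos hn hN y
  have hD := cDen_pos hn hN hu
  have hs : tanhD y = (N - n - 1) * (N - 1 - (N - 2 * n - 1) * uRoot N n y)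
      / (uRoot N n y * cDen N n (uRoot N n y)) :=
    eq_div_of_mul_eq (by positivity) (tanhD_mul_cDen hn hN y)
  have hc : cFun N n y = -(2 * n * (N - n - 1)) / cDen N n (uRoot N n y) :=
    eq_div_of_mul_eq hD.ne' (cFun_mul_cDen hn hN y)
  have h1 : n - 1 ≠ 0 := by linarith
  have h2 : N - n - 1 ≠ 0 := by linarith
  have hm : N - 2 * n ≠ 0 := by linarith
  have hn0 : n ≠ 0 := by linarith
  rw [lam3, aFun_eq, bFun_sq_eq, hs, hc, cascadePoly]
  generalize N - 2 * n = m at hm ⊢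
  field_simp
  ring

theorem lam3_neg_iff (y : ℝ) : lam3 N n y < 0 ↔ 0 < cascadePoly N n (uRoot N n y) := by
  have := uRoot_pos hn hN y
  have : 0 < N - n - 1 := by linarith
  have : 0 < N - 2 * n := by linarith
  rw [lam3_eq hn hN, neg_div, neg_lt_zero, div_pos_iff_of_pos_right (by positivity)]

theorem lam3_pos_iff (y : ℝ) : 0 < lam3 N n y ↔ cascadePoly N n (uRoot N n y) < 0 := by
  have := uRoot_pos hn hN y
  have : 0 < N - n - 1 := by linarith
  have : 0 < N - 2 * n := by linarith
  rw [lam3_eq hn hN, div_pos_iff_of_pos_right (by positivity), neg_pos]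

end Reduction

/- On the interval in question each of these sextics has positive Bernstein coefficients, in
degree 6 or, for `n = 26`, in degree 13 (positivity survives degree elevation); so it is a
positive combination of the products `(u - a)ⁱ (b - u)ʲ` given to `linarith`. -/
theorem cascadePoly_pos (n : ℤ) (h2 : 2 ≤ n) (h26 : n ≤ 26) {u : ℝ} (hu : 1 ≤ u)
    (hu' : (99 - 2 * n) * u ≤ 99) : 0 < cascadePoly 100 n u := by
  have bern (i j : ℕ) : 0 ≤ (u - 1) ^ i * (99 - (99 - 2 * n) * u) ^ j :=
    mul_nonneg (pow_nonneg (by linarith) i) (pow_nonneg (by linarith) j)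
  interval_cases n <;>
  · simp only [cascadePoly, cDen]
    push_cast at bern ⊢
    linarith [bern 0 13, bern 1 12, bern 2 11, bern 3 10, bern 4 9, bern 5 8, bern 6 7, bern 7 6,
      bern 8 5, bern 9 4, bern 10 3, bern 11 2, bern 12 1, bern 13 0]

theorem cascadePoly_27_neg {u : ℝ} (hu : 73 / 50 ≤ u) (hu' : u ≤ 147 / 100) :
    cascadePoly 100 27 u < 0 := by
  have bern (i j : ℕ) : 0 ≤ (u - 73 / 50) ^ i * (147 / 100 - u) ^ j :=
    mul_nonneg (pow_nonneg (by linarith) i) (pow_nonneg (by linarith) j)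
  simp only [cascadePoly, cDen]
  linarith [bern 0 6, bern 1 5, bern 2 4, bern 3 3, bern 4 2, bern 5 1, bern 6 0]

theorem uRoot_log_three_mem :
    73 / 50 ≤ uRoot 100 27 (log 3) ∧ uRoot 100 27 (log 3) ≤ 147 / 100 := by
  have hu := uRoot_pos (N := 100) (n := 27) (by norm_num) (by norm_num) (log 3)
  have hs := tanhD_mul_cDen (N := 100) (n := 27) (by norm_num) (by norm_num) (log 3)
  rw [tanhD_eq, tanh_log_three, cDen] at hs
  constructor <;> nlinarith

/-- For `N = 100`: no cascade is possible when `n ≤ 26`, while a cascade is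
possible when `n = 27`. -/
theorem stmt_17 :
    (∀ n : ℤ, 2 ≤ n → n ≤ 26 → ∀ y : ℝ, 0 ≤ y → lam3 (100 : ℝ) (n : ℝ) y < 0) ∧
    (∃ y : ℝ, 0 < y ∧ 0 < lam3 (100 : ℝ) (27 : ℝ) y) := by
  constructor
  · intro n h2 h26 y _
    have hn : (1 : ℝ) < n := by exact_mod_cast (by omega : (1 : ℤ) < n)
    have hN : 2 * (n : ℝ) < 100 := by
      have : (n : ℝ) ≤ 26 := by exact_mod_cast h26
      linarith
    obtain ⟨hu, hu'⟩ := uRoot_mem hn hN y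
    rw [lam3_neg_iff hn hN]
    exact cascadePoly_pos n h2 h26 hu (by linarith)
  · refine ⟨log 3, log_pos (by norm_num), ?_⟩
    rw [lam3_pos_iff (by norm_num) (by norm_num)]
    exact cascadePoly_27_neg uRoot_log_three_mem.1 uRoot_log_three_mem.2
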